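/- Define d_n = 2^n · C_n − y_n for n ≥ 1 (with d_0 = 0). Then d_n ≡ C_n (mod 2) for all n ≥ 1; in particular d_n is odd if and only if n is a power of 2. -/
import Mathlib

open scoped Classical

private lemma aux_pow_lt {a b k : ℕ} (hab : a < b) (h : 2^a + 2^b = 2^k) : False := by
  have hb : (2:ℕ)^b = 2^a * 2^(b-a) := by rw [← pow_add]; congr 1; omega
  have hak : a < k := by
    have h1 : (0:ℕ) < 2^b := pow_pos (by norm_num) _
    have : (2:ℕ)^a < 2^k := by omega
    exact (Nat.pow_lt_pow_iff_right (by norm_num)).mp this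
  have hk : (2:ℕ)^k = 2^a * 2^(k-a) := by rw [← pow_add]; congr 1; omega
  have hpos : (0:ℕ) < 2^a := pow_pos (by norm_num) _
  have hcancel : 1 + 2^(b-a) = 2^(k-a) := by
    have : 2^a * (1 + 2^(b-a)) = 2^a * 2^(k-a) := by
      rw [Nat.mul_add, mul_one, ← hb, ← hk]; exact h
    exact Nat.eq_of_mul_eq_mul_left hpos this
  have e1 : (2:ℕ)^(b-a) = 2 * 2^(b-a-1) := by
    rw [← pow_succ']; congr 1; omega
  have e2 : (2:ℕ)^(k-a) = 2 * 2^(k-a-1) := by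
    rw [← pow_succ']; congr 1; omega
  omega

private lemma pow2_add_pow2 {a b k : ℕ} (h : 2^a + 2^b = 2^k) : a = b := by
  rcases lt_trichotomy a b with hab | hab | hab
  · exact absurd h (fun h => aux_pow_lt hab h)
  · exact hab
  · exact absurd h (fun h => aux_pow_lt (k := k) hab (by omega))

private lemma catalan_parity (C : ℕ → ℤ) (hC1 : C 1 = 1)
    (hC : ∀ n, 2 ≤ n → C n = ∑ i ∈ Finset.Ico 1 n, C i * C (n - i)) :
    ∀ n, 1 ≤ n → ((C n : ZMod 2) = if ∃ i : ℕ, n = 2^i then 1 else 0) := by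
  intro n
  induction n using Nat.strong_induction_on with
  | _ n ih =>
    intro hn
    rcases eq_or_lt_of_le hn with h1 | h2
    · rw [← h1, if_pos ⟨0, rfl⟩, hC1]; norm_num
    · have h2n : 2 ≤ n := h2
      have hcast : (C n : ZMod 2) = ∑ i ∈ Finset.Ico 1 n,
          (C i : ZMod 2) * (C (n-i) : ZMod 2) := by
        rw [hC n h2n]; push_cast; ring
      rw [hcast]
      have hterm : ∀ i ∈ Finset.Ico 1 n, (C i : ZMod 2) * (C (n-i) : ZMod 2) =
          if (∃ a, i = 2^a) ∧ (∃ b, n - i = 2^b) then 1 else 0 := by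
        intro i hi
        simp only [Finset.mem_Ico] at hi
        rw [ih i hi.2 hi.1, ih (n-i) (by omega) (by omega)]
        by_cases ha : ∃ a, i = 2^a <;> by_cases hb : ∃ b, n-i=2^b <;>
          simp [ha, hb]
      rw [Finset.sum_congr rfl hterm]
      by_cases hp : ∃ k, n = 2^k
      · rw [if_pos hp]
        obtain ⟨k, hk⟩ := hp
        have hk1 : 1 ≤ k := by
          by_contra h
          have : k = 0 := by omega
          rw [this] at hk; simp at hk; omega
        have hhalf : 2^(k-1) + 2^(k-1) = n := by
          rw [hk]
          have : (2:ℕ)^k = 2 * 2^(k-1) := by rw [← pow_succ']; congr 1; omega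
          omega
        have hset : ∀ i ∈ Finset.Ico 1 n,
            ((∃ a, i = 2^a) ∧ (∃ b, n - i = 2^b)) ↔ i = 2^(k-1) := by
          intro i hi
          simp only [Finset.mem_Ico] at hi
          constructor
          · rintro ⟨⟨a, rfl⟩, ⟨b, hb⟩⟩
            have hsum : 2^a + 2^b = 2^k := by omega
            have hab : a = b := pow2_add_pow2 hsum
            subst hab
            have : (2:ℕ)^(a+1) = 2^k := by rw [pow_succ']; omega
            have hak : a + 1 = k := Nat.pow_right_injective (by norm_num) this
            congr 1; omega
          · rintro rfl
            exact ⟨⟨k-1, rfl⟩, ⟨k-1, by omega⟩⟩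
        rw [Finset.sum_congr rfl (fun i hi => if_congr (hset i hi) rfl rfl)]
        rw [Finset.sum_ite_eq' (Finset.Ico 1 n) (2^(k-1)) (fun _ => (1 : ZMod 2))]
        rw [if_pos]
        simp only [Finset.mem_Ico]
        constructor
        · exact Nat.one_le_two_pow
        · omega
      · rw [if_neg hp]
        apply Finset.sum_involution (fun i _ => n - i)
        · intro i hi
          simp only [Finset.mem_Ico] at hi
          have hni : n - (n - i) = i := by omega
          by_cases hPi : (∃ a, i = 2^a) ∧ (∃ b, n - i = 2^b)
          · rw [if_pos hPi, if_pos (by rw [hni]; exact ⟨hPi.2, hPi.1⟩)]; decide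
          · rw [if_neg hPi, if_neg (by rw [hni]; intro h; exact hPi ⟨h.2, h.1⟩)]
            decide
        · intro i hi hne
          simp only [Finset.mem_Ico] at hi
          intro heq
          have hPi : (∃ a, i = 2^a) ∧ (∃ b, n - i = 2^b) := by
            by_contra h; rw [if_neg h] at hne; exact hne rfl
          obtain ⟨⟨a, rfl⟩, -⟩ := hPi
          exact hp ⟨a+1, by rw [pow_succ']; omega⟩
        · intro i hi
          simp only [Finset.mem_Ico] at hi ⊢
          omega
        · intro i hi
          simp only [Finset.mem_Ico] at hi
          omega

theorem d_parity (C y d : ℕ → ℤ)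
    (hC0 : C 0 = 0) (hC1 : C 1 = 1)
    (hC : ∀ n, 2 ≤ n → C n = ∑ i ∈ Finset.Ico 1 n, C i * C (n - i))
    (hy0 : y 0 = 0) (hy1 : y 1 = 1)
    (hy : ∀ n, 2 ≤ n → y n = ∑ i ∈ Finset.Ico 1 n,
      (2 ^ i * C i - y i) * (2 ^ (n - i) * C (n - i) - y (n - i)))
    (hd0 : d 0 = 0)
    (hd : ∀ n, 1 ≤ n → d n = 2 ^ n * C n - y n) :
    (∀ n, 1 ≤ n → d n % 2 = C n % 2) ∧
    (∀ n, 1 ≤ n → (Odd (d n) ↔ ∃ i : ℕ, n = 2 ^ i)) := by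
  have hdC : ∀ n, 1 ≤ n → ((d n : ZMod 2) = (C n : ZMod 2)) := by
    intro n
    induction n using Nat.strong_induction_on with
    | _ n ih =>
      intro hn
      rcases eq_or_lt_of_le hn with h1 | h2
      · rw [← h1, hd 1 le_rfl, hC1, hy1]; norm_num
      · have hyn : y n = ∑ i ∈ Finset.Ico 1 n, d i * d (n - i) := by
          rw [hy n h2]
          apply Finset.sum_congr rfl
          intro i hi
          simp only [Finset.mem_Ico] at hi
          rw [hd i hi.1, hd (n-i) (by omega)]
        have hZ : (d n : ZMod 2) = (y n : ZMod 2) := by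
          rw [hd n hn]
          push_cast
          have h2z : (2 : ZMod 2) = 0 := by decide
          rw [h2z, zero_pow (by omega : n ≠ 0), zero_mul, zero_sub, CharTwo.neg_eq]
        rw [hZ, hyn]
        push_cast
        have : ∑ i ∈ Finset.Ico 1 n, (d i : ZMod 2) * (d (n-i) : ZMod 2)
            = ∑ i ∈ Finset.Ico 1 n, (C i : ZMod 2) * (C (n-i) : ZMod 2) := by
          apply Finset.sum_congr rfl
          intro i hi
          simp only [Finset.mem_Ico] at hi
          rw [ih i hi.2 hi.1, ih (n-i) (by omega) (by omega)]
        rw [this]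
        have : (C n : ZMod 2) = ∑ i ∈ Finset.Ico 1 n,
            (C i : ZMod 2) * (C (n-i) : ZMod 2) := by
          rw [hC n h2]; push_cast; ring
        rw [← this]
  have hCpar := catalan_parity C hC1 hC
  constructor
  · intro n hn
    have := (ZMod.intCast_eq_intCast_iff _ _ 2).mp (hdC n hn)
    exact this
  · intro n hn
    rw [Int.odd_iff]
    have h1 : d n % 2 = C n % 2 := (ZMod.intCast_eq_intCast_iff _ _ 2).mp (hdC n hn)
    rw [h1]
    have h2 := hCpar n hn
    by_cases hp : ∃ i : ℕ, n = 2^i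
    · rw [if_pos hp] at h2
      have : (C n : ZMod 2) = ((1 : ℤ) : ZMod 2) := by rw [h2]; norm_num
      have := (ZMod.intCast_eq_intCast_iff _ _ 2).mp this
      simp only [Int.ModEq] at this
      constructor
      · intro _; exact hp
      · intro _; omega
    · rw [if_neg hp] at h2
      have : (C n : ZMod 2) = ((0 : ℤ) : ZMod 2) := by rw [h2]; norm_num
      have := (ZMod.intCast_eq_intCast_iff _ _ 2).mp this
      simp only [Int.ModEq] at this
      constructor
      · intro h; omega
      · intro h; exact absurd h hp
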